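/- arXiv:1907.12313 — 2 statements merged into one kernel-verified Lean document; each statement's English description precedes it below -/
import Mathlib

section
/- Let n ≥ 1, 1 ≤ k ≤ n, let r₀₀, r₁, …, r_n be real numbers and x ∈ ℝ^n, and let α₁ ≤ α₂ ≤ … ≤ α_{k+1} be the real roots, listed with multiplicity in nondecreasing order, of p_{k+1}(t) = (r₀₀ + t) σ_k(r+tI) − Σ_{i=1}^n q_{i,k}(t) x_i². Then for every index i with 2 ≤ i ≤ k−1, the root α_i lies in the interval [min_{1≤j≤n}(−r_j), max_{1≤j≤n}(−r_j)]. -/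
open Polynomial

/-- `σ_m(r+tI) = Σ_{1≤i₁<…<i_m≤n} (t+r_{i₁})⋯(t+r_{i_m})` as a real polynomial in `t`. -/
noncomputable def sigmaTP (n : ℕ) (r : Fin n → ℝ) (m : ℕ) : Polynomial ℝ :=
  ∑ s ∈ Finset.powersetCard m (Finset.univ : Finset (Fin n)),
    ∏ i ∈ s, (X + C (r i))

/-- `q_{i,k}(t) = Σ_{j=0}^{k−1} (−1)^j σ_{k−1−j}(r+tI) (t+r_i)^j`. -/
noncomputable def qPoly (n : ℕ) (r : Fin n → ℝ) (i : Fin n) (k : ℕ) : Polynomial ℝ :=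
  ∑ j ∈ Finset.range k, ((-1 : ℝ) ^ j) • (sigmaTP n r (k - 1 - j) * (X + C (r i)) ^ j)

/-- `p_{k+1}(t) = (r₀₀ + t) σ_k(r+tI) − Σ_{i=1}^n q_{i,k}(t) x_i²`. -/
noncomputable def pPoly (n k : ℕ) (r₀₀ : ℝ) (r : Fin n → ℝ) (x : Fin n → ℝ) :
    Polynomial ℝ :=
  (X + C r₀₀) * sigmaTP n r k - ∑ i : Fin n, ((x i) ^ 2) • qPoly n r i k

/-- `π_n(t) = (t+r₁)⋯(t+r_n)`. -/
noncomputable def piN (n : ℕ) (r : Fin n → ℝ) : Polynomial ℝ :=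
  ∏ i : Fin n, (X + C (r i))

/-- `π_{i,n}(t) = ∏_{j≠i} (t+r_j)`. -/
noncomputable def piIN (n : ℕ) (r : Fin n → ℝ) (i : Fin n) : Polynomial ℝ :=
  ∏ j ∈ Finset.univ.erase i, (X + C (r j))

set_option linter.unusedSectionVars false
section Aux
open Finset

variable {ι : Type*} [DecidableEq ι] {R : Type*} [CommRing R]

/-- elementary symmetric function of `f` over `s`. -/
def esym (s : Finset ι) (f : ι → R) (m : ℕ) : R :=
  ∑ t ∈ s.powersetCard m, ∏ i ∈ t, f i

lemma esym_zero (s : Finset ι) (f : ι → R) : esym s f 0 = 1 := by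
  simp [esym]

lemma esym_empty (f : ι → R) (m : ℕ) : esym (∅ : Finset ι) f (m + 1) = 0 := by
  rw [esym, Finset.powersetCard_eq_empty.2 (by simp), Finset.sum_empty]

lemma esym_insert {a : ι} {s : Finset ι} (ha : a ∉ s) (f : ι → R) (m : ℕ) :
    esym (insert a s) f (m + 1) = esym s f (m + 1) + f a * esym s f m := by
  unfold esym
  rw [Finset.powersetCard_succ_insert ha, Finset.sum_union, Finset.sum_image, Finset.mul_sum]
  · congr 1
    refine Finset.sum_congr rfl fun t ht => ?_
    rw [Finset.prod_insert]
    intro hat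
    exact ha ((Finset.mem_powersetCard.1 ht).1 hat)
  · intro t ht u hu htu
    have h1 : a ∉ t := fun h => ha ((Finset.mem_powersetCard.1 ht).1 h)
    have h2 : a ∉ u := fun h => ha ((Finset.mem_powersetCard.1 hu).1 h)
    have := congrArg (Finset.erase · a) htu
    simpa [Finset.erase_insert h1, Finset.erase_insert h2] using this
  · rw [Finset.disjoint_left]
    intro t ht ht'
    obtain ⟨u, hu, rfl⟩ := Finset.mem_image.1 ht'
    exact ha ((Finset.mem_powersetCard.1 ht).1 (Finset.mem_insert_self a u))

lemma esym_nonneg {s : Finset ι} {f : ι → ℝ} (hf : ∀ i ∈ s, 0 ≤ f i) (m : ℕ) :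
    0 ≤ esym s f m := by
  refine Finset.sum_nonneg fun t ht => Finset.prod_nonneg fun i hi => ?_
  exact hf i ((Finset.mem_powersetCard.1 ht).1 hi)

lemma esym_zero_succ {f : ι → ℝ} (s : Finset ι) :
    (∀ i ∈ s, 0 ≤ f i) → ∀ m : ℕ, esym s f m = 0 → esym s f (m + 1) = 0 := by
  induction s using Finset.induction_on with
  | empty => intro _ m _; exact esym_empty f m
  | @insert a s ha ih =>
    intro hf m hm
    have hf' : ∀ i ∈ s, 0 ≤ f i := fun i hi => hf i (Finset.mem_insert_of_mem hi)
    have hfa : 0 ≤ f a := hf a (Finset.mem_insert_self a s)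
    cases m with
    | zero => simp [esym_zero] at hm
    | succ m =>
      rw [esym_insert ha] at hm
      have h1 : esym s f (m + 1) = 0 ∧ f a * esym s f m = 0 := by
        constructor <;> nlinarith [esym_nonneg hf' (m+1), esym_nonneg hf' m,
          mul_nonneg hfa (esym_nonneg hf' m)]
      rw [esym_insert ha, ih hf' (m+1) h1.1, zero_add]
      rcases mul_eq_zero.1 h1.2 with h | h
      · rw [h, zero_mul]
      · rw [ih hf' m h, mul_zero]

lemma seq_gap {A : ℕ → ℝ} (hA : ∀ m, 0 ≤ A m)
    (h2 : ∀ m, A m * A (m + 2) ≤ A (m + 1) ^ 2)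
    (h0 : ∀ m, A m = 0 → A (m + 1) = 0) (m : ℕ) :
    A m * A (m + 3) ≤ A (m + 1) * A (m + 2) := by
  rcases eq_or_lt_of_le (mul_nonneg (hA (m+1)) (hA (m+2))) with h | h
  · rcases mul_eq_zero.1 h.symm with h' | h'
    · have h3 := h0 _ (h0 _ h')
      have h4 : A (m + 3) = 0 := by convert h3 using 2
      rw [h4, mul_zero]
      exact mul_nonneg (hA _) (hA _)
    · have h3 := h0 _ h'
      have h4 : A (m + 3) = 0 := by convert h3 using 2
      rw [h4, mul_zero]
      exact mul_nonneg (hA _) (hA _)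
  · have g3 : A (m + 1) * A (m + 3) ≤ A (m + 2) ^ 2 := by
      have := h2 (m + 1); convert this using 3
    have g4 : A m * A (m + 2) ≤ A (m + 1) ^ 2 := h2 m
    have key := mul_le_mul g4 g3 (mul_nonneg (hA _) (hA _)) (sq_nonneg _)
    have key2 : (A m * A (m + 3)) * (A (m + 1) * A (m + 2)) ≤
        (A (m + 1) * A (m + 2)) * (A (m + 1) * A (m + 2)) := by nlinarith [key]
    exact le_of_mul_le_mul_right key2 h

lemma esym_newton {f : ι → ℝ} (s : Finset ι) :
    (∀ i ∈ s, 0 ≤ f i) → ∀ m : ℕ, esym s f m * esym s f (m + 2) ≤ esym s f (m + 1) ^ 2 := by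
  induction s using Finset.induction_on with
  | empty =>
    intro _ m
    rw [esym_empty, mul_zero]
    positivity
  | @insert a s ha ih =>
    intro hf m
    have hf' : ∀ i ∈ s, 0 ≤ f i := fun i hi => hf i (Finset.mem_insert_of_mem hi)
    have hfa : 0 ≤ f a := hf a (Finset.mem_insert_self a s)
    have hih := ih hf'
    have hA : ∀ m', 0 ≤ esym s f m' := esym_nonneg hf'
    have hgap := seq_gap hA hih (esym_zero_succ s hf')
    cases m with
    | zero =>
      rw [esym_zero, one_mul, esym_insert ha, esym_insert ha, esym_zero]
      have h1 := hih 0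
      rw [esym_zero, one_mul] at h1
      nlinarith [hA 0, hA 1, hA 2, mul_nonneg hfa (hA 1)]
    | succ m =>
      rw [esym_insert ha, esym_insert ha, esym_insert ha]
      have g1 := hih (m + 1)
      have g2 := hih m
      have g3 := hgap m
      nlinarith [hA m, hA (m+1), hA (m+2), hA (m+3), mul_nonneg hfa hfa,
        mul_nonneg hfa (hA (m+1)), mul_nonneg hfa (hA m)]

/-- the key inequality (★). -/
lemma esym_star {f : ι → ℝ} {a : ι} {s : Finset ι} (ha : a ∉ s)
    (hf : ∀ i ∈ insert a s, 0 ≤ f i) (m : ℕ) :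
    esym s f m * esym (insert a s) f (m + 2) ≤ esym s f (m + 1) * esym (insert a s) f (m + 1) := by
  have hf' : ∀ i ∈ s, 0 ≤ f i := fun i hi => hf i (Finset.mem_insert_of_mem hi)
  have hfa : 0 ≤ f a := hf a (Finset.mem_insert_self a s)
  rw [esym_insert ha, esym_insert ha]
  have h1 := esym_newton s hf' m
  have h2 := esym_nonneg hf' (m + 1)
  nlinarith [esym_nonneg hf' m, esym_nonneg hf' (m+2)]

lemma esym_neg (s : Finset ι) (f : ι → ℝ) (m : ℕ) :
    esym s (fun i => -f i) m = (-1) ^ m * esym s f m := by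
  unfold esym
  rw [Finset.mul_sum]
  refine Finset.sum_congr rfl fun t ht => ?_
  have h1 : ∏ i ∈ t, -f i = ∏ i ∈ t, ((-1 : ℝ) * f i) := by simp
  rw [h1, Finset.prod_mul_distrib, Finset.prod_const, (Finset.mem_powersetCard.1 ht).2]

lemma esym_pos {f : ι → ℝ} {s : Finset ι} (hf : ∀ i ∈ s, 0 < f i) {m : ℕ} (hm : m ≤ s.card) :
    0 < esym s f m := by
  refine Finset.sum_pos (fun t ht => Finset.prod_pos fun i hi =>
    hf i ((Finset.mem_powersetCard.1 ht).1 hi)) ?_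
  exact Finset.powersetCard_nonempty.2 hm

lemma esym_ringHom {S : Type*} [CommRing S] (φ : R →+* S) (s : Finset ι) (f : ι → R) (m : ℕ) :
    φ (esym s f m) = esym s (fun i => φ (f i)) m := by
  unfold esym
  rw [map_sum]
  exact Finset.sum_congr rfl fun t _ => map_prod φ _ _


lemma derivative_prod_linear (t : Finset ι) (g : ι → ℝ) :
    derivative (∏ i ∈ t, (X + C (g i))) = ∑ i ∈ t, ∏ j ∈ t.erase i, (X + C (g j)) := by
  induction t using Finset.induction_on with
  | empty => simp
  | @insert a t ha ih =>
    rw [Finset.prod_insert ha, derivative_mul, ih, Finset.sum_insert ha,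
      Finset.erase_insert ha]
    rw [derivative_add, derivative_X, derivative_C, add_zero, one_mul, Finset.mul_sum]
    congr 1
    refine Finset.sum_congr rfl fun i hi => ?_
    have hai : a ≠ i := fun h => ha (h ▸ hi)
    rw [Finset.erase_insert_of_ne hai, Finset.prod_insert]
    exact fun h => ha (Finset.erase_subset _ _ h)

/-- derivative of an elementary symmetric polynomial of linear factors. -/
lemma derivative_esym (s : Finset ι) (g : ι → ℝ) (m : ℕ) :
    derivative (esym s (fun i => X + C (g i)) (m + 1)) =
      (s.card - m : ℕ) • esym s (fun i => X + C (g i)) m := by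
  unfold esym
  rw [derivative_sum]
  have step : ∀ t ∈ s.powersetCard (m + 1),
      derivative (∏ i ∈ t, (X + C (g i))) = ∑ i ∈ t, ∏ j ∈ t.erase i, (X + C (g j)) := by
    intro t _
    exact derivative_prod_linear t g
  rw [Finset.sum_congr rfl step]
  have swap : ∑ t ∈ s.powersetCard (m + 1), ∑ i ∈ t, ∏ j ∈ t.erase i, (X + C (g j)) =
      ∑ u ∈ s.powersetCard m, ∑ i ∈ s \ u, ∏ j ∈ u, (X + C (g j)) := by
    rw [Finset.sum_sigma', Finset.sum_sigma']
    refine Finset.sum_nbij' (fun p => ⟨p.1.erase p.2, p.2⟩) (fun p => ⟨insert p.2 p.1, p.2⟩)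
      ?_ ?_ ?_ ?_ ?_
    · rintro ⟨t, i⟩ hp
      simp only [Finset.mem_sigma] at hp ⊢
      obtain ⟨ht, hi⟩ := hp
      obtain ⟨hts, htc⟩ := Finset.mem_powersetCard.1 ht
      refine ⟨Finset.mem_powersetCard.2 ⟨(Finset.erase_subset _ _).trans hts, ?_⟩, ?_⟩
      · rw [Finset.card_erase_of_mem hi, htc]
        omega
      · exact Finset.mem_sdiff.2 ⟨hts hi, Finset.notMem_erase _ _⟩
    · rintro ⟨u, i⟩ hp
      simp only [Finset.mem_sigma] at hp ⊢
      obtain ⟨hu, hi⟩ := hp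
      obtain ⟨hus, huc⟩ := Finset.mem_powersetCard.1 hu
      obtain ⟨his, hiu⟩ := Finset.mem_sdiff.1 hi
      refine ⟨Finset.mem_powersetCard.2 ⟨?_, ?_⟩, Finset.mem_insert_self _ _⟩
      · exact Finset.insert_subset his hus
      · rw [Finset.card_insert_of_notMem hiu, huc]
    · rintro ⟨t, i⟩ hp
      simp only [Finset.mem_sigma] at hp
      simp [Finset.insert_erase hp.2]
    · rintro ⟨u, i⟩ hp
      simp only [Finset.mem_sigma] at hp
      have hiu := (Finset.mem_sdiff.1 hp.2).2
      simp [Finset.erase_insert hiu]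
    · rintro ⟨t, i⟩ _
      rfl
  rw [swap]
  rw [Finset.smul_sum]
  refine Finset.sum_congr rfl fun u hu => ?_
  rw [Finset.sum_const]
  congr 1
  rw [Finset.card_sdiff_of_subset (Finset.mem_powersetCard.1 hu).1, (Finset.mem_powersetCard.1 hu).2]

lemma sigmaTP_eq_esym (n : ℕ) (r : Fin n → ℝ) (m : ℕ) :
    sigmaTP n r m = esym Finset.univ (fun i => X + C (r i)) m := rfl

lemma qPoly_succ (n : ℕ) (r : Fin n → ℝ) (i : Fin n) (k : ℕ) :
    qPoly n r i (k + 1) = sigmaTP n r k - (X + C (r i)) * qPoly n r i k := by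
  unfold qPoly
  rw [Finset.sum_range_succ']
  have h1 : ∀ j ∈ Finset.range k,
      ((-1 : ℝ) ^ (j + 1)) • (sigmaTP n r (k + 1 - 1 - (j + 1)) * (X + C (r i)) ^ (j + 1)) =
      -((X + C (r i)) * (((-1 : ℝ) ^ j) • (sigmaTP n r (k - 1 - j) * (X + C (r i)) ^ j))) := by
    intro j hj
    have e : k + 1 - 1 - (j + 1) = k - 1 - j := by omega
    rw [e]
    simp only [Polynomial.smul_eq_C_mul, map_pow, map_neg, map_one]
    ring
  rw [Finset.sum_congr rfl h1]
  have h2 : ((-1 : ℝ) ^ 0) • (sigmaTP n r (k + 1 - 1 - 0) * (X + C (r i)) ^ 0) =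
      sigmaTP n r k := by
    simp
  rw [h2, Finset.sum_neg_distrib, ← Finset.mul_sum]
  ring

lemma sigmaTP_split (n : ℕ) (r : Fin n → ℝ) (i : Fin n) (m : ℕ) :
    sigmaTP n r (m + 1) =
      esym (Finset.univ.erase i) (fun j => X + C (r j)) (m + 1) +
        (X + C (r i)) * esym (Finset.univ.erase i) (fun j => X + C (r j)) m := by
  rw [sigmaTP_eq_esym, ← Finset.insert_erase (Finset.mem_univ i),
    esym_insert (Finset.notMem_erase i _)]
  rw [Finset.erase_insert (Finset.notMem_erase i _)]

lemma qPoly_eq_esym (n : ℕ) (r : Fin n → ℝ) (i : Fin n) (k : ℕ) :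
    qPoly n r i (k + 1) = esym (Finset.univ.erase i) (fun j => X + C (r j)) k := by
  induction k with
  | zero =>
    rw [esym_zero]
    unfold qPoly
    simp [sigmaTP_eq_esym, esym_zero]
  | succ k ih =>
    rw [qPoly_succ, ih, sigmaTP_split n r i]
    ring

lemma eval_esym_linear (t : ℝ) (s : Finset ι) (g : ι → ℝ) (m : ℕ) :
    eval t (esym s (fun j => X + C (g j)) m) = esym s (fun j => t + g j) m := by
  have h := esym_ringHom (evalRingHom t) s (fun j => X + C (g j)) m
  simpa using h

lemma pow_neg_one_cancel (K L : ℕ) (h : Even (K + L)) : ((-1 : ℝ)) ^ K * ((-1)) ^ L = 1 := by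
  rw [← pow_add]
  exact Even.neg_one_pow h

lemma key_ineq (n K : ℕ) (y : Fin n → ℝ)
    (ht : (∀ j, 0 < y j) ∨ (∀ j, y j < 0)) (i : Fin n) :
    esym (Finset.univ.erase i) y K * esym Finset.univ y (K + 2) ≤
      esym (Finset.univ.erase i) y (K + 1) * esym Finset.univ y (K + 1) := by
  have hins : insert i (Finset.univ.erase i) = (Finset.univ : Finset (Fin n)) :=
    Finset.insert_erase (Finset.mem_univ i)
  rcases ht with hpos | hneg
  · have hf : ∀ j ∈ insert i (Finset.univ.erase i), 0 ≤ y j := fun j _ => (hpos j).le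
    have h := esym_star (Finset.notMem_erase i _) hf K
    rwa [hins] at h
  · set z : Fin n → ℝ := fun j => -y j with hz
    have hy : y = fun j => -z j := by funext j; simp [hz]
    have hsign : ∀ (s : Finset (Fin n)) m, esym s y m = (-1 : ℝ) ^ m * esym s z m := by
      intro s m
      rw [hy]
      exact esym_neg s z m
    have hf : ∀ j ∈ insert i (Finset.univ.erase i), 0 ≤ z j := fun j _ => by
      simp only [hz]
      linarith [hneg j]
    have hstar := esym_star (Finset.notMem_erase i _) hf K
    rw [hins] at hstar
    rw [hsign, hsign, hsign, hsign]
    have c1 : ((-1 : ℝ)) ^ K * ((-1 : ℝ)) ^ (K + 2) = 1 :=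
      pow_neg_one_cancel K (K + 2) ⟨K + 1, by omega⟩
    have c2 : ((-1 : ℝ)) ^ (K + 1) * ((-1 : ℝ)) ^ (K + 1) = 1 :=
      pow_neg_one_cancel (K + 1) (K + 1) ⟨K + 1, by omega⟩
    calc ((-1 : ℝ)) ^ K * esym (Finset.univ.erase i) z K *
          (((-1 : ℝ)) ^ (K + 2) * esym Finset.univ z (K + 2))
        = (((-1 : ℝ)) ^ K * ((-1 : ℝ)) ^ (K + 2)) *
            (esym (Finset.univ.erase i) z K * esym Finset.univ z (K + 2)) := by ring
      _ = esym (Finset.univ.erase i) z K * esym Finset.univ z (K + 2) := by rw [c1, one_mul]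
      _ ≤ esym (Finset.univ.erase i) z (K + 1) * esym Finset.univ z (K + 1) := hstar
      _ = (((-1 : ℝ)) ^ (K + 1) * ((-1 : ℝ)) ^ (K + 1)) *
            (esym (Finset.univ.erase i) z (K + 1) * esym Finset.univ z (K + 1)) := by
              rw [c2, one_mul]
      _ = ((-1 : ℝ)) ^ (K + 1) * esym (Finset.univ.erase i) z (K + 1) *
            (((-1 : ℝ)) ^ (K + 1) * esym Finset.univ z (K + 1)) := by ring

lemma esym_univ_ne_zero (n K : ℕ) (hkn : K + 2 ≤ n) (y : Fin n → ℝ)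
    (ht : (∀ j, 0 < y j) ∨ (∀ j, y j < 0)) : esym Finset.univ y (K + 2) ≠ 0 := by
  have hcard : (Finset.univ : Finset (Fin n)).card = n := by simp
  rcases ht with hpos | hneg
  · exact (esym_pos (fun j _ => hpos j) (by rw [hcard]; exact hkn)).ne'
  · set z : Fin n → ℝ := fun j => -y j with hz
    have hy : y = fun j => -z j := by funext j; simp [hz]
    rw [hy, esym_neg]
    have hzpos : ∀ j ∈ (Finset.univ : Finset (Fin n)), 0 < z j := fun j _ => by
      simp only [hz]; linarith [hneg j]
    exact mul_ne_zero (pow_ne_zero _ (by norm_num)) (esym_pos hzpos (by rw [hcard]; exact hkn)).ne'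

lemma deriv_sigmaTP (n : ℕ) (r : Fin n → ℝ) (K : ℕ) :
    derivative (sigmaTP n r (K + 2)) = (n - (K + 1) : ℕ) • sigmaTP n r (K + 1) := by
  rw [sigmaTP_eq_esym, sigmaTP_eq_esym, derivative_esym]
  congr 2
  simp

lemma deriv_qPoly (n : ℕ) (r : Fin n → ℝ) (i : Fin n) (K : ℕ) (hkn : K + 2 ≤ n) :
    derivative (qPoly n r i (K + 2)) =
      (n - (K + 1) : ℕ) • esym (Finset.univ.erase i) (fun j => X + C (r j)) K := by
  have h : qPoly n r i (K + 2) = esym (Finset.univ.erase i) (fun j => X + C (r j)) (K + 1) :=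
    qPoly_eq_esym n r i (K + 1)
  rw [h, derivative_esym]
  have hc : (Finset.univ.erase i).card - K = n - (K + 1) := by
    rw [Finset.card_erase_of_mem (Finset.mem_univ i)]
    simp only [Finset.card_univ, Fintype.card_fin]
    omega
  rw [hc]

lemma W_pos (n K : ℕ) (hkn : K + 2 ≤ n) (r₀₀ : ℝ) (r x : Fin n → ℝ) (t : ℝ)
    (ht : (∀ j, 0 < t + r j) ∨ (∀ j, t + r j < 0)) :
    0 < eval t (derivative (pPoly n (K + 2) r₀₀ r x)) * eval t (sigmaTP n r (K + 2))
        - eval t (pPoly n (K + 2) r₀₀ r x) * eval t (derivative (sigmaTP n r (K + 2))) := by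
  set y : Fin n → ℝ := fun j => t + r j with hy
  set cR : ℝ := ((n - (K + 1) : ℕ) : ℝ) with hcR
  have eS : ∀ m, eval t (sigmaTP n r m) = esym Finset.univ y m := fun m => by
    rw [sigmaTP_eq_esym, eval_esym_linear]
  have eE : ∀ (s : Finset (Fin n)) m,
      eval t (esym s (fun j => X + C (r j)) m) = esym s y m := fun s m => by
    rw [eval_esym_linear]
  have eQ : ∀ i, eval t (qPoly n r i (K + 2)) = esym (Finset.univ.erase i) y (K + 1) := by
    intro i
    rw [qPoly_eq_esym n r i (K + 1), eval_esym_linear]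
  have edS : eval t (derivative (sigmaTP n r (K + 2))) = cR * esym Finset.univ y (K + 1) := by
    rw [deriv_sigmaTP, nsmul_eq_mul, eval_mul, eval_natCast, eS]
  have edQ : ∀ i, eval t (derivative (qPoly n r i (K + 2))) =
      cR * esym (Finset.univ.erase i) y K := by
    intro i
    rw [deriv_qPoly n r i K hkn, nsmul_eq_mul, eval_mul, eval_natCast, eE]
  have eP : eval t (pPoly n (K + 2) r₀₀ r x) =
      (t + r₀₀) * esym Finset.univ y (K + 2)
        - ∑ i, x i ^ 2 * esym (Finset.univ.erase i) y (K + 1) := by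
    unfold pPoly
    rw [eval_sub, eval_mul, eval_add, eval_X, eval_C, eval_finset_sum, eS]
    congr 1
    exact Finset.sum_congr rfl fun i _ => by rw [eval_smul, eQ, smul_eq_mul]
  have edP : eval t (derivative (pPoly n (K + 2) r₀₀ r x)) =
      esym Finset.univ y (K + 2) + (t + r₀₀) * (cR * esym Finset.univ y (K + 1))
        - ∑ i, x i ^ 2 * (cR * esym (Finset.univ.erase i) y K) := by
    unfold pPoly
    rw [derivative_sub, derivative_mul, derivative_sum, eval_sub, eval_add, eval_mul, eval_mul]
    rw [derivative_add, derivative_X, derivative_C, add_zero, eval_one, one_mul]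
    rw [eval_add, eval_X, eval_C, eS, edS, eval_finset_sum]
    congr 1
    exact Finset.sum_congr rfl fun i _ => by
      rw [derivative_smul, eval_smul, edQ, smul_eq_mul]
  rw [eP, edP, edS, eS]
  set A2 := esym Finset.univ y (K + 2) with hA2def
  set A1 := esym Finset.univ y (K + 1) with hA1def
  set B1 : Fin n → ℝ := fun i => esym (Finset.univ.erase i) y (K + 1) with hB1def
  set B0 : Fin n → ℝ := fun i => esym (Finset.univ.erase i) y K with hB0def
  have hsplit : ∑ i, x i ^ 2 * (B1 i * A1 - B0 i * A2) =
      (∑ i, x i ^ 2 * B1 i) * A1 - (∑ i, x i ^ 2 * B0 i) * A2 := by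
    rw [Finset.sum_mul, Finset.sum_mul, ← Finset.sum_sub_distrib]
    exact Finset.sum_congr rfl fun i _ => by ring
  have hc0 : ∑ i, x i ^ 2 * (cR * B0 i) = cR * ∑ i, x i ^ 2 * B0 i := by
    rw [Finset.mul_sum]
    exact Finset.sum_congr rfl fun i _ => by ring
  have hE : (A2 + (t + r₀₀) * (cR * A1) - ∑ i, x i ^ 2 * (cR * B0 i)) * A2
      - ((t + r₀₀) * A2 - ∑ i, x i ^ 2 * B1 i) * (cR * A1)
      = A2 ^ 2 + cR * (∑ i, x i ^ 2 * (B1 i * A1 - B0 i * A2)) := by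
    rw [hc0, hsplit]
    ring
  rw [hE]
  have hsum : 0 ≤ ∑ i, x i ^ 2 * (B1 i * A1 - B0 i * A2) := by
    refine Finset.sum_nonneg fun i _ => mul_nonneg (sq_nonneg _) ?_
    have := key_ineq n K y ht i
    simp only [← hA2def, ← hA1def, ← hB1def, ← hB0def] at this
    linarith
  have hA2ne : A2 ≠ 0 := esym_univ_ne_zero n K hkn y ht
  have hA2sq : 0 < A2 ^ 2 := (sq_nonneg A2).lt_of_ne (fun h => hA2ne (by
    have := h.symm
    exact pow_eq_zero_iff (by norm_num) |>.1 this))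
  have hcR : 0 ≤ cR := Nat.cast_nonneg _
  nlinarith [mul_nonneg hcR hsum]

lemma no_two_roots {P S : Polynomial ℝ} {R : Set ℝ} (hR : R.OrdConnected)
    (hS : ∀ u ∈ R, eval u S ≠ 0)
    (hW : ∀ u ∈ R, 0 < eval u (derivative P) * eval u S - eval u P * eval u (derivative S))
    {t₁ t₂ : ℝ} (ht₁ : t₁ ∈ R) (ht₂ : t₂ ∈ R) (hlt : t₁ < t₂)
    (hP₁ : eval t₁ P = 0) (hP₂ : eval t₂ P = 0) : False := by
  set f : ℝ → ℝ := fun u => eval u P / eval u S with hf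
  have hIcc : Set.Icc t₁ t₂ ⊆ R := hR.out ht₁ ht₂
  have hcont : ContinuousOn f (Set.Icc t₁ t₂) :=
    ContinuousOn.div P.continuousOn S.continuousOn fun u hu => hS u (hIcc hu)
  have hfI : f t₁ = f t₂ := by simp [hf, hP₁, hP₂]
  obtain ⟨c, hc, hdc⟩ := exists_deriv_eq_zero hlt hcont hfI
  have hcR : c ∈ R := hIcc ⟨hc.1.le, hc.2.le⟩
  have hSc : eval c S ≠ 0 := hS c hcR
  have hd : HasDerivAt f
      ((eval c (derivative P) * eval c S - eval c P * eval c (derivative S)) / (eval c S) ^ 2)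
      c := (P.hasDerivAt c).div (S.hasDerivAt c) hSc
  rw [hd.deriv] at hdc
  have hnum := (div_eq_zero_iff.1 hdc).resolve_right (pow_ne_zero 2 hSc)
  have := hW c hcR
  rw [hnum] at this
  exact lt_irrefl 0 this

lemma double_root_zero {P : Polynomial ℝ} {t0 : ℝ} (h : (X - C t0) ^ 2 ∣ P) :
    eval t0 P = 0 ∧ eval t0 (derivative P) = 0 := by
  obtain ⟨g, rfl⟩ := h
  constructor
  · simp
  · rw [derivative_mul, derivative_pow, derivative_sub, derivative_X, derivative_C, sub_zero]
    simp


end Aux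

/-- for `2 ≤ m ≤ k−1`, the `m`-th root `α_m` of `p_{k+1}` (roots listed
with multiplicity in nondecreasing order, here `α_m = α ⟨m−1⟩`) lies in the interval
`[min_j (−r_j), max_j (−r_j)]`. -/
theorem pPoly_middle_roots_bounded (n k : ℕ) (hn : 1 ≤ n) (hk1 : 1 ≤ k) (hkn : k ≤ n)
    (r₀₀ : ℝ) (r x : Fin n → ℝ)
    (α : Fin (k + 1) → ℝ) (hα : Monotone α)
    (hαroots : (pPoly n k r₀₀ r x).roots = Multiset.map α Finset.univ.val) :
    ∀ i : Fin (k + 1), 2 ≤ (i : ℕ) + 1 → (i : ℕ) + 1 ≤ k - 1 →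
      sInf (Set.range fun j => -r j) ≤ α i ∧ α i ≤ sSup (Set.range fun j => -r j) := by
  intro i h2i hik
  have hi1 : 1 ≤ (i : ℕ) := by omega
  have hik2 : (i : ℕ) + 2 ≤ k := by omega
  obtain ⟨K, rfl⟩ : ∃ K, k = K + 2 := ⟨k - 2, by omega⟩
  have hKn : K + 2 ≤ n := hkn
  set P := pPoly n (K + 2) r₀₀ r x with hP
  set S := sigmaTP n r (K + 2) with hS
  have hPne : P ≠ 0 := by
    intro h
    have hcard := congrArg Multiset.card hαroots
    rw [h, Polynomial.roots_zero] at hcard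
    simp at hcard
  have hroot : ∀ j : Fin (K + 2 + 1), IsRoot P (α j) := by
    intro j
    have hmem : α j ∈ P.roots := by
      rw [hαroots]
      exact Multiset.mem_map.2 ⟨j, by simp, rfl⟩
    exact (Polynomial.mem_roots'.1 hmem).2
  set mval := sInf (Set.range fun j => -r j) with hmval
  set Mval := sSup (Set.range fun j => -r j) with hMval
  have hm_le : ∀ j, mval ≤ -r j := fun j =>
    csInf_le (Set.finite_range _).bddBelow ⟨j, rfl⟩
  have hM_ge : ∀ j, -r j ≤ Mval := fun j =>
    le_csSup (Set.finite_range _).bddAbove ⟨j, rfl⟩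
  have contra : ∀ (Rg : Set ℝ), Rg.OrdConnected →
      (∀ u ∈ Rg, (∀ j, 0 < u + r j) ∨ (∀ j, u + r j < 0)) →
      ∀ (a b : Fin (K + 2 + 1)), a ≠ b → α a ∈ Rg → α b ∈ Rg → False := by
    intro Rg hOC hsgn a b hab hae hbe
    have hSne : ∀ u ∈ Rg, eval u S ≠ 0 := by
      intro u hu
      rw [hS, sigmaTP_eq_esym, eval_esym_linear]
      exact esym_univ_ne_zero n K hKn _ (hsgn u hu)
    have hWp : ∀ u ∈ Rg,
        0 < eval u (derivative P) * eval u S - eval u P * eval u (derivative S) :=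
      fun u hu => W_pos n K hKn r₀₀ r x u (hsgn u hu)
    rcases lt_trichotomy (α a) (α b) with h | h | h
    · exact no_two_roots hOC hSne hWp hae hbe h (hroot a) (hroot b)
    · classical
      have hcount : 2 ≤ P.roots.count (α a) := by
        rw [hαroots, Multiset.count_map]
        have hsub : ({a, b} : Finset (Fin (K + 2 + 1))) ⊆
            Finset.univ.filter (fun z => α a = α z) := by
          intro z hz
          rcases Finset.mem_insert.1 hz with rfl | hz
          · simp
          · rw [Finset.mem_singleton.1 hz]
            simp [h]
        calc 2 = ({a, b} : Finset _).card := (Finset.card_pair hab).symm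
          _ ≤ (Finset.univ.filter (fun z => α a = α z)).card := Finset.card_le_card hsub
          _ = Multiset.card (Multiset.filter (fun z => α a = α z) Finset.univ.val) := by
              rw [← Finset.filter_val]
              rfl
      have hmult : 2 ≤ rootMultiplicity (α a) P := by
        rw [← Polynomial.count_roots]
        exact hcount
      have hdvd : (X - C (α a)) ^ 2 ∣ P :=
        (pow_dvd_pow _ hmult).trans (P.pow_rootMultiplicity_dvd (α a))
      obtain ⟨hP0, hP1⟩ := double_root_zero hdvd
      have hc := hWp (α a) hae
      rw [hP0, hP1] at hc
      simp at hc
    · exact no_two_roots hOC hSne hWp hbe hae h (hroot b) (hroot a)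
  constructor
  · by_contra hlt
    push_neg at hlt
    have h0le : α ⟨0, by omega⟩ ≤ α i := hα (by simp [Fin.le_def])
    refine contra (Set.Iio mval) Set.ordConnected_Iio ?_ ⟨0, by omega⟩ i ?_ ?_ ?_
    · intro u hu
      exact Or.inr fun j => by have := hm_le j; have hu' : u < mval := hu; linarith
    · intro h
      have := congrArg Fin.val h
      simp at this
      omega
    · exact lt_of_le_of_lt h0le hlt
    · exact hlt
  · by_contra hlt
    push_neg at hlt
    have hlast : α i ≤ α (Fin.last (K + 2)) := hα (Fin.le_last i)
    refine contra (Set.Ioi Mval) Set.ordConnected_Ioi ?_ i (Fin.last (K + 2)) ?_ ?_ ?_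
    · intro u hu
      exact Or.inl fun j => by have := hM_ge j; have hu' : Mval < u := hu; linarith
    · intro h
      have := congrArg Fin.val h
      simp [Fin.last] at this
      omega
    · exact hlt
    · exact lt_of_lt_of_le hlt hlast
end

section
/- Let n ≥ 2, 2 ≤ k ≤ n, 1 ≤ i ≤ n, and let r₁, …, r_n be real numbers. Then the derivative of q_{i,k} satisfies, as an identity of real polynomials in t, q_{i,k}'(t) = (n−k+1) q_{i,k−1}(t). -/
/-!
Since `σ_m = e_m + (t + r_i) e_{m-1}`, where `e_m` are the elementary symmetric functions of the
`n - 1` factors `t + r_j` with `j ≠ i`, the alternating sum defining `q_{i,k}` telescopes to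
`e_{k-1}`. Each factor has derivative `1`, so `e_{m+1}' = (n - 1 - m) e_m`: every `m`-subset of
the factors is obtained from exactly `n - 1 - m` subsets of size `m + 1` by deleting one factor.
-/

open Polynomial

noncomputable def esymmP (n : ℕ) (r : Fin n → ℝ) (A : Finset (Fin n)) (m : ℕ) : Polynomial ℝ :=
  ∑ s ∈ A.powersetCard m, ∏ j ∈ s, (X + C (r j))


namespace Multiset

variable {R : Type*}

theorem esymm_cons_succ [CommSemiring R] (a : R) (s : Multiset R) (m : ℕ) :
    (a ::ₘ s).esymm (m + 1) = s.esymm (m + 1) + a * s.esymm m := by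
  simp only [esymm, powersetCard_cons, map_add, sum_add, map_map, Function.comp_def, prod_cons,
    sum_map_mul_left]

theorem esymm_zero [CommSemiring R] (s : Multiset R) : s.esymm 0 = 1 := by
  simp [esymm]

/-- Inverting `esymm_cons_succ`: dividing out the factor `1 + a t` of the generating function
`∑ esymm (a ::ₘ s) m tᵐ` means multiplying by `∑ (-a t)ʲ`. -/
theorem esymm_eq_alternating_sum_esymm_cons [CommRing R] (a : R) (s : Multiset R) (k : ℕ) :
    ∑ j ∈ Finset.range (k + 1), (-1) ^ j * (a ::ₘ s).esymm (k - j) * a ^ j = s.esymm k := by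
  induction k with
  | zero => simp [esymm_zero]
  | succ k ih =>
    have hshift : ∑ j ∈ Finset.range (k + 1),
        (-1) ^ (j + 1) * (a ::ₘ s).esymm (k + 1 - (j + 1)) * a ^ (j + 1) =
          -(a * ∑ j ∈ Finset.range (k + 1), (-1) ^ j * (a ::ₘ s).esymm (k - j) * a ^ j) := by
      rw [Finset.mul_sum, ← Finset.sum_neg_distrib]
      refine Finset.sum_congr rfl fun j _ => ?_
      rw [Nat.add_sub_add_right]
      ring
    rw [Finset.sum_range_succ', hshift, ih, Nat.sub_zero, esymm_cons_succ]
    ring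

/-- Subtraction-free form of `(esymm s (m + 1))' = (card s - m) • esymm s m`, valid for all `m`. -/
theorem derivative_esymm_succ_add [CommRing R] (s : Multiset R[X])
    (hs : ∀ p ∈ s, derivative p = 1) (m : ℕ) :
    derivative (s.esymm (m + 1)) + m • s.esymm m = card s • s.esymm m := by
  induction s using Multiset.induction_on generalizing m with
  | empty => cases m <;> simp [esymm, powersetCard_zero_right]
  | cons p s ih =>
    have hp : derivative p = 1 := hs p (mem_cons_self p s)
    replace ih := ih fun q hq => hs q (mem_cons_of_mem hq)
    cases m with
    | zero =>
      have h0 := ih 0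
      simp only [esymm_zero, zero_smul, add_zero] at h0 ⊢
      rw [esymm_cons_succ, derivative_add, derivative_mul, h0, hp, card_cons]
      simp [esymm_zero, add_smul]
    | succ m =>
      have h1 := ih (m + 1)
      have h2 := ih m
      rw [esymm_cons_succ, esymm_cons_succ, derivative_add, derivative_mul, hp, card_cons]
      simp only [nsmul_eq_mul, Nat.cast_add, Nat.cast_one] at h1 h2 ⊢
      linear_combination h1 + p * h2

end Multiset

open Finset in
theorem sigmaTP_eq_esymm_cons (n : ℕ) (r : Fin n → ℝ) (i : Fin n) (m : ℕ) :
    sigmaTP n r m =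
      ((X + C (r i)) ::ₘ (univ.erase i).val.map fun j => X + C (r j)).esymm m := by
  rw [sigmaTP, ← esymm_map_val, ← Multiset.cons_erase (mem_univ_val i), ← erase_val,
    Multiset.map_cons]

open Finset in
theorem qPoly_succ_eq_esymm (n : ℕ) (r : Fin n → ℝ) (i : Fin n) (k : ℕ) :
    qPoly n r i (k + 1) = ((univ.erase i).val.map fun j => X + C (r j)).esymm k := by
  rw [← Multiset.esymm_eq_alternating_sum_esymm_cons (X + C (r i)), qPoly]
  refine sum_congr rfl fun j _ => ?_
  rw [Nat.add_sub_cancel, sigmaTP_eq_esymm_cons n r i, smul_eq_C_mul]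
  simp only [map_pow, map_neg, map_one]
  ring

theorem qPoly_derivative_general (n k : ℕ) (hk2 : 2 ≤ k) (hkn : k ≤ n)
    (i : Fin n) (r : Fin n → ℝ) :
    Polynomial.derivative (qPoly n r i k) =
      ((n - k + 1 : ℕ) : ℝ) • qPoly n r i (k - 1) := by
  obtain ⟨m, rfl⟩ : ∃ m, k = m + 2 := ⟨k - 2, by omega⟩
  set s := (Finset.univ.erase i).val.map fun j => X + C (r j)
  have hD := Multiset.derivative_esymm_succ_add s (by simp [s]) m
  have hcard : Multiset.card s = n - (m + 2) + 1 + m := by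
    rw [Multiset.card_map, Finset.card_val, Finset.card_erase_of_mem (Finset.mem_univ i),
      Finset.card_univ, Fintype.card_fin]
    omega
  rw [show m + 2 - 1 = m + 1 from rfl, qPoly_succ_eq_esymm, qPoly_succ_eq_esymm,
    eq_sub_of_add_eq hD, hcard, add_smul, add_sub_cancel_right, Nat.cast_smul_eq_nsmul]

/-- `q_{i,k}'(t) = (n−k+1) q_{i,k−1}(t)`. -/
theorem qPoly_derivative (n k : ℕ) (hn : 2 ≤ n) (hk2 : 2 ≤ k) (hkn : k ≤ n)
    (i : Fin n) (r : Fin n → ℝ) :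
    Polynomial.derivative (qPoly n r i k) =
      ((n - k + 1 : ℕ) : ℝ) • qPoly n r i (k - 1) :=
  qPoly_derivative_general n k hk2 hkn i r
end
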